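/- Let p and q be probability densities with respect to a σ-finite measure μ on X, and let V(D) = ∫ p(x) log D(x) dμ(x) + ∫ q(x) log(1 − D(x)) dμ(x) for measurable D : X → (0,1). Then the supremum of V over all such D equals −log 4 + 2·JSD(P‖Q), and it is attained at D*(x) = p(x)/(p(x)+q(x)) (defined arbitrarily where p(x)+q(x) = 0). -/

import Mathlib

/-! Pointwise, `t ↦ a log t + b log (1 - t)` is maximised on `(0, 1)` at `t = a / (a + b)`: this is
Gibbs' inequality for two-point distributions, a consequence of `a - c ≤ a log (a / c)`.
Integrating gives the optimality of `D* = p / (p + q)`. The mixture `M = (P + Q) / 2` has density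
`(p + q) / 2`, so `KL(P‖M) = log 2 + ∫ p log (p / (p + q))` and symmetrically for `Q`; adding these
two identities evaluates `V(D*)` as `-log 4 + 2 JSD(P‖Q)`. -/

open MeasureTheory
open scoped ENNReal Classical

/-- The Kullback–Leibler divergence `KL(P‖Q)`: equal to `∫ log (dP/dQ) dP` when `P ≪ Q`
(and this log-likelihood ratio is `P`-integrable), and `+∞` otherwise. -/
noncomputable def klDiv {X : Type*} [MeasurableSpace X] (P Q : Measure X) : EReal :=
  if P ≪ Q ∧ Integrable (llr P Q) P then ((∫ x, llr P Q x ∂P : ℝ) : EReal) else ⊤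

/-- The Jensen–Shannon divergence `JSD(P‖Q) = (1/2) KL(P‖M) + (1/2) KL(Q‖M)` where
`M = (1/2)(P + Q)`. -/
noncomputable def jsd {X : Type*} [MeasurableSpace X] (P Q : Measure X) : EReal :=
  (((2 : ℝ)⁻¹ : ℝ) : EReal) * klDiv P ((2 : ℝ≥0∞)⁻¹ • (P + Q))
    + (((2 : ℝ)⁻¹ : ℝ) : EReal) * klDiv Q ((2 : ℝ≥0∞)⁻¹ • (P + Q))

open Real

lemma sub_le_mul_log_div {a c : ℝ} (ha : 0 ≤ a) (hc : 0 < c) : a - c ≤ a * log (a / c) := by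
  have h := self_sub_one_le_mul_log (div_nonneg ha hc.le)
  calc a - c = c * (a / c - 1) := by field_simp
    _ ≤ c * (a / c * log (a / c)) := by gcongr
    _ = a * log (a / c) := by field_simp

lemma mul_log_div_mul {a c d : ℝ} (hc : c ≠ 0) (hd : d ≠ 0) :
    a * log (a / (c * d)) = a * log (a / c) - a * log d := by
  rcases eq_or_ne a 0 with rfl | ha
  · simp
  · rw [← div_div, log_div (div_ne_zero ha hc) hd, mul_sub]

lemma mul_log_one_sub_div_add {a b : ℝ} (ha : 0 ≤ a) (hb : 0 ≤ b) :
    b * log (1 - a / (a + b)) = b * log (b / (b + a)) := by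
  rcases (add_nonneg ha hb).eq_or_lt with hab | hab
  · obtain rfl : b = 0 := by linarith
    simp
  · rw [one_sub_div hab.ne', add_sub_cancel_left, add_comm]

lemma mul_log_add_mul_log_one_sub_le {a b t : ℝ} (ha : 0 ≤ a) (hb : 0 ≤ b) (ht₀ : 0 < t)
    (ht₁ : t < 1) :
    a * log t + b * log (1 - t) ≤ a * log (a / (a + b)) + b * log (1 - a / (a + b)) := by
  rw [mul_log_one_sub_div_add ha hb, add_comm b a]
  rcases (add_nonneg ha hb).eq_or_lt with hab | hab
  · obtain ⟨rfl, rfl⟩ : a = 0 ∧ b = 0 := ⟨by linarith, by linarith⟩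
    simp
  have hs : 0 < 1 - t := sub_pos.2 ht₁
  have hpa := sub_le_mul_log_div ha (mul_pos hab ht₀)
  have hpb := sub_le_mul_log_div hb (mul_pos hab hs)
  rw [mul_log_div_mul hab.ne' ht₀.ne'] at hpa
  rw [mul_log_div_mul hab.ne' hs.ne'] at hpb
  -- the left-hand sides of `hpa` and `hpb` add up to `0`
  linarith

lemma abs_mul_log_div_add_le {a b : ℝ} (ha : 0 ≤ a) (hb : 0 ≤ b) :
    |a * log (a / (a + b))| ≤ b := by
  rcases (add_nonneg ha hb).eq_or_lt with hab | hab
  · obtain rfl : a = 0 := by linarith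
    simpa using hb
  have hlog : log (a / (a + b)) ≤ 0 :=
    log_nonpos (by positivity) (div_le_one_of_le₀ (by linarith) hab.le)
  rw [abs_le]
  exact ⟨by linarith [sub_le_mul_log_div ha hab],
    (mul_nonpos_of_nonneg_of_nonpos ha hlog).trans hb⟩

section Densities

variable {X : Type*} [MeasurableSpace X] {μ : Measure X}

lemma integrable_mul_log_div_add {p q : X → ℝ} (hpm : Measurable p) (hqm : Measurable q)
    (hp₀ : ∀ x, 0 ≤ p x) (hq₀ : ∀ x, 0 ≤ q x) (hqi : Integrable q μ) :
    Integrable (fun x => p x * log (p x / (p x + q x))) μ := by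
  refine hqi.mono (by fun_prop) (ae_of_all _ fun x => ?_)
  simpa [abs_of_nonneg (hq₀ x)] using abs_mul_log_div_add_le (hp₀ x) (hq₀ x)

lemma inv_two_smul_withDensity_ofReal_add {p q : X → ℝ} (hpm : Measurable p)
    (hp₀ : ∀ x, 0 ≤ p x) (hq₀ : ∀ x, 0 ≤ q x) :
    (2 : ℝ≥0∞)⁻¹ • (μ.withDensity (fun x => ENNReal.ofReal (p x))
        + μ.withDensity (fun x => ENNReal.ofReal (q x)))
      = μ.withDensity (fun x => ENNReal.ofReal ((p x + q x) * 2⁻¹)) := by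
  have hdens : (fun x => ENNReal.ofReal ((p x + q x) * 2⁻¹))
      = (2 : ℝ≥0∞)⁻¹ • ((fun x => ENNReal.ofReal (p x)) + fun x => ENNReal.ofReal (q x)) := by
    funext x
    rw [ENNReal.ofReal_mul (add_nonneg (hp₀ x) (hq₀ x)), ENNReal.ofReal_add (hp₀ x) (hq₀ x),
      ENNReal.ofReal_inv_of_pos two_pos, ENNReal.ofReal_ofNat, mul_comm]
    rfl
  rw [hdens, withDensity_smul' _ _ (by simp), withDensity_add_left hpm.ennreal_ofReal]

lemma klDiv_withDensity_ofReal [SigmaFinite μ] {f g : X → ℝ} (hfm : Measurable f)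
    (hgm : Measurable g) (hf₀ : ∀ x, 0 ≤ f x) (hg₀ : ∀ x, 0 ≤ g x)
    (hfg : ∀ x, g x = 0 → f x = 0) (hint : Integrable (fun x => f x * log (f x / g x)) μ) :
    klDiv (μ.withDensity fun x => ENNReal.ofReal (f x))
        (μ.withDensity fun x => ENNReal.ofReal (g x))
      = ((∫ x, f x * log (f x / g x) ∂μ : ℝ) : EReal) := by
  set P := μ.withDensity fun x => ENNReal.ofReal (f x)
  set M := μ.withDensity fun x => ENNReal.ofReal (g x)
  have hratio : Measurable fun x => f x / g x := hfm.div hgm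
  have hPM : P = M.withDensity fun x => ENNReal.ofReal (f x / g x) := by
    rw [← withDensity_mul _ hgm.ennreal_ofReal hratio.ennreal_ofReal]
    refine congrArg μ.withDensity (funext fun x => ?_)
    rw [Pi.mul_apply, ← ENNReal.ofReal_mul (hg₀ x)]
    rcases eq_or_ne (g x) 0 with hx | hx
    · simp [hx, hfg x hx]
    · rw [mul_div_cancel₀ _ hx]
  have hac : P ≪ M := hPM ▸ withDensity_absolutelyContinuous M _
  have hllr : llr P M =ᵐ[P] fun x => log (f x / g x) := by
    have hrn := hPM ▸ Measure.rnDeriv_withDensity M hratio.ennreal_ofReal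
    filter_upwards [hac.ae_le hrn] with x hx
    rw [llr, hx, ENNReal.toReal_ofReal (div_nonneg (hf₀ x) (hg₀ x))]
  have hdensity : ∀ᵐ x ∂μ, ENNReal.ofReal (f x) < ⊤ := ae_of_all _ fun _ => ENNReal.ofReal_lt_top
  have hsmul : (fun x => (ENNReal.ofReal (f x)).toReal • log (f x / g x))
      = fun x => f x * log (f x / g x) := by
    funext x
    rw [ENNReal.toReal_ofReal (hf₀ x), smul_eq_mul]
  have hint_P : Integrable (llr P M) P := by
    rw [integrable_congr hllr,
      integrable_withDensity_iff_integrable_smul' hfm.ennreal_ofReal hdensity, hsmul]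
    exact hint
  rw [klDiv, if_pos ⟨hac, hint_P⟩, integral_congr_ae hllr,
    integral_withDensity_eq_integral_toReal_smul hfm.ennreal_ofReal hdensity, hsmul]

lemma klDiv_inv_two_smul_withDensity_ofReal_add [SigmaFinite μ] {p q : X → ℝ}
    (hpm : Measurable p) (hqm : Measurable q) (hp₀ : ∀ x, 0 ≤ p x) (hq₀ : ∀ x, 0 ≤ q x)
    (hp₁ : ∫ x, p x ∂μ = 1) (hqi : Integrable q μ) :
    klDiv (μ.withDensity fun x => ENNReal.ofReal (p x))
        ((2 : ℝ≥0∞)⁻¹ • (μ.withDensity (fun x => ENNReal.ofReal (p x))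
          + μ.withDensity (fun x => ENNReal.ofReal (q x))))
      = ((log 2 + ∫ x, p x * log (p x / (p x + q x)) ∂μ : ℝ) : EReal) := by
  have hpi := integrable_of_integral_eq_one hp₁
  have hlog : (fun x => p x * log (p x / ((p x + q x) * 2⁻¹)))
      = fun x => p x * log (p x / (p x + q x)) + log 2 * p x := by
    funext x
    rcases (add_nonneg (hp₀ x) (hq₀ x)).eq_or_lt with hs | hs
    · have hpx : p x = 0 := by linarith [hp₀ x, hq₀ x]
      simp [hpx]
    · rw [mul_log_div_mul hs.ne' (by norm_num), log_inv]
      ring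
  have hIp := integrable_mul_log_div_add hpm hqm hp₀ hq₀ hqi
  rw [inv_two_smul_withDensity_ofReal_add hpm hp₀ hq₀,
    klDiv_withDensity_ofReal hpm (by fun_prop) hp₀
      (fun x => mul_nonneg (add_nonneg (hp₀ x) (hq₀ x)) (by norm_num))
      (fun x hx => by nlinarith [hp₀ x, hq₀ x]) (hlog ▸ hIp.add (hpi.const_mul _)),
    hlog, integral_add hIp (hpi.const_mul _), integral_const_mul, hp₁, mul_one, add_comm]

end Densities

/-- The optimal GAN discriminator: for probability densities `p, q` w.r.t. a σ-finite
measure `μ`, the GAN value `V(D) = ∫ p log D dμ + ∫ q log (1 − D) dμ` over measurable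
`D : X → (0,1)` is maximized by `D*(x) = p(x)/(p(x)+q(x))` (defined arbitrarily where
`p(x)+q(x) = 0`), and the supremum equals `−log 4 + 2·JSD(P‖Q)`. -/
theorem gan_value_sup_eq_jsd
    {X : Type*} [MeasurableSpace X] (μ : Measure X) [SigmaFinite μ]
    (p q : X → ℝ) (hpm : Measurable p) (hqm : Measurable q)
    (hp0 : ∀ x, 0 ≤ p x) (hq0 : ∀ x, 0 ≤ q x)
    (hp1 : ∫ x, p x ∂μ = 1) (hq1 : ∫ x, q x ∂μ = 1) :
    -- the supremum is attained at `D*(x) = p(x)/(p(x)+q(x))` ...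
    (∀ D : X → ℝ, Measurable D → (∀ x, D x ∈ Set.Ioo (0 : ℝ) 1) →
      Integrable (fun x => p x * Real.log (D x)) μ →
      Integrable (fun x => q x * Real.log (1 - D x)) μ →
      (∫ x, p x * Real.log (D x) ∂μ) + (∫ x, q x * Real.log (1 - D x) ∂μ)
        ≤ (∫ x, p x * Real.log (p x / (p x + q x)) ∂μ)
          + (∫ x, q x * Real.log (1 - p x / (p x + q x)) ∂μ)) ∧
    -- ... and its value there is `−log 4 + 2·JSD(P‖Q)`
    ((((∫ x, p x * Real.log (p x / (p x + q x)) ∂μ)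
        + (∫ x, q x * Real.log (1 - p x / (p x + q x)) ∂μ) : ℝ) : EReal)
      = ((-(Real.log 4) : ℝ) : EReal)
        + ((2 : ℝ) : EReal) * jsd (μ.withDensity (fun x => ENNReal.ofReal (p x)))
            (μ.withDensity (fun x => ENNReal.ofReal (q x)))) := by
  have hpi := integrable_of_integral_eq_one hp1
  have hqi := integrable_of_integral_eq_one hq1
  have hswap : (fun x => q x * log (1 - p x / (p x + q x)))
      = fun x => q x * log (q x / (q x + p x)) :=
    funext fun x => mul_log_one_sub_div_add (hp0 x) (hq0 x)
  have hIp := integrable_mul_log_div_add hpm hqm hp0 hq0 hqi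
  have hIq := hswap ▸ integrable_mul_log_div_add hqm hpm hq0 hp0 hpi
  refine ⟨fun D _ hD hIpD hIqD => ?_, ?_⟩
  · rw [← integral_add hIpD hIqD, ← integral_add hIp hIq]
    exact integral_mono (hIpD.add hIqD) (hIp.add hIq)
      fun x => mul_log_add_mul_log_one_sub_le (hp0 x) (hq0 x) (hD x).1 (hD x).2
  · have hklQ := klDiv_inv_two_smul_withDensity_ofReal_add hqm hpm hq0 hp0 hq1 hpi
    rw [add_comm (μ.withDensity _)] at hklQ
    rw [jsd, klDiv_inv_two_smul_withDensity_ofReal_add hpm hqm hp0 hq0 hp1 hqi, hklQ, hswap,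
      show (4 : ℝ) = 2 ^ 2 by norm_num, log_pow]
    norm_cast
    ring
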